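/- Let 0 ≤ R < 1 and β ∈ (0, 1/2). Define g : [0, 1/2] → ℝ by g(D) = 0 for 0 ≤ D < β and g(D) = H_b(D) - H_b(β) for β ≤ D ≤ 1/2, where H_b is the binary entropy function (log base 2). Let D* ∈ (β, 1/2] be the unique point at which the line from the origin is tangent to H_b(D) - H_b(β), i.e., satisfying (H_b(D*) - H_b(β))/D* = H_b'(D*) = log((1-D*)/D*). Then the upper concave envelope of g on [0, 1/2] (the pointwise least concave function on [0,1/2] dominating g) is given by D ↦ (D/D*)(H_b(D*) - H_b(β)) for D ∈ [0, D*] and by H_b(D) - H_b(β) for D ∈ [D*, 1/2]. -/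
import Mathlib


/-- Binary entropy `H_b(p) = -p log₂ p - (1-p) log₂ (1-p)`. -/
noncomputable def Hb (p : ℝ) : ℝ :=
  -p * Real.logb 2 p - (1 - p) * Real.logb 2 (1 - p)

lemma Hb_eq (p : ℝ) : Hb p = Real.binEntropy p / Real.log 2 := by
  unfold Hb Real.binEntropy Real.logb
  rw [Real.log_inv, Real.log_inv]
  ring

lemma concaveOn_affine_comp {s : Set ℝ} {f : ℝ → ℝ} (hf : ConcaveOn ℝ s f)
    (a b : ℝ) (ha : 0 ≤ a) : ConcaveOn ℝ s (fun x => a * f x + b) := by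
  refine ⟨hf.1, fun x hx y hy p q hp hq hpq => ?_⟩
  have h1 := hf.2 hx hy hp hq hpq
  simp only [smul_eq_mul] at h1 ⊢
  have h2 : a * (p * f x + q * f y) ≤ a * f (p * x + q * y) :=
    mul_le_mul_of_nonneg_left h1 ha
  have h3 : p * b + q * b = b := by linear_combination b * hpq
  nlinarith [h2, h3]

set_option maxHeartbeats 1600000

/-- Let `0 ≤ R < 1` (unused rate) and `β ∈ (0,1/2)`. Define
`g(D) = 0` for `0 ≤ D < β` and `g(D) = H_b(D) - H_b(β)` for `β ≤ D ≤ 1/2`.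
Let `D* ∈ (β, 1/2]` be the point where the line from the origin is tangent to
`H_b(D) - H_b(β)`, i.e. `(H_b(D*) - H_b(β))/D* = log₂((1-D*)/D*)`. Then the upper
concave envelope of `g` on `[0,1/2]` — the least concave function dominating `g` — is
given by `D ↦ (D/D*)(H_b(D*) - H_b(β))` on `[0, D*]` and by `H_b(D) - H_b(β)` on
`[D*, 1/2]`: this function is concave, dominates `g`, and is below every concave
function dominating `g` on `[0, 1/2]`. -/
theorem upper_concave_envelope_info_embedding
    (β Dstar : ℝ) (hβ : β ∈ Set.Ioo (0 : ℝ) (1/2))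
    (hD1 : β < Dstar) (hD2 : Dstar ≤ 1/2)
    (htangent : (Hb Dstar - Hb β) / Dstar = Real.logb 2 ((1 - Dstar) / Dstar)) :
    let g : ℝ → ℝ := fun D => if D < β then 0 else Hb D - Hb β
    let env : ℝ → ℝ := fun D =>
      if D ≤ Dstar then (D / Dstar) * (Hb Dstar - Hb β) else Hb D - Hb β
    ConcaveOn ℝ (Set.Icc 0 (1/2)) env ∧
    (∀ D ∈ Set.Icc (0 : ℝ) (1/2), g D ≤ env D) ∧
    (∀ h : ℝ → ℝ, ConcaveOn ℝ (Set.Icc 0 (1/2)) h →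
      (∀ D ∈ Set.Icc (0 : ℝ) (1/2), g D ≤ h D) →
      ∀ D ∈ Set.Icc (0 : ℝ) (1/2), env D ≤ h D) := by
  intro g env
  obtain ⟨hβ0, hβ2⟩ := hβ
  have hlog2 : (0:ℝ) < Real.log 2 := Real.log_pos (by norm_num)
  have hD0 : 0 < Dstar := lt_trans hβ0 hD1
  have hD1' : Dstar ≠ 1 := by intro h; rw [h] at hD2; norm_num at hD2
  have hDmem : Dstar ∈ Set.Icc (0:ℝ) (1/2) := ⟨hD0.le, hD2⟩
  obtain ⟨c, hc_def⟩ : ∃ c, c = Real.logb 2 ((1 - Dstar) / Dstar) := ⟨_, rfl⟩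
  rw [← hc_def] at htangent
  -- Hb Dstar - Hb β = c * Dstar
  have hcD : Hb Dstar - Hb β = c * Dstar := by
    rw [← htangent]
    exact (div_mul_cancel₀ _ hD0.ne').symm
  -- unfolding lemmas for g and env
  have hg_lt : ∀ D : ℝ, D < β → g D = 0 := fun D h => if_pos h
  have hg_ge : ∀ D : ℝ, β ≤ D → g D = Hb D - Hb β := fun D h => if_neg (not_lt.mpr h)
  have henv_eq_lin : ∀ x, x ≤ Dstar → env x = c * x := by
    intro x hx
    show (if x ≤ Dstar then (x / Dstar) * (Hb Dstar - Hb β) else Hb x - Hb β) = c * x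
    rw [if_pos hx, hcD,
      show x / Dstar * (c * Dstar) = c * x * (Dstar / Dstar) by ring,
      div_self hD0.ne', mul_one]
  have henv_eq_f : ∀ x, Dstar < x → env x = Hb x - Hb β := by
    intro x hx
    show (if x ≤ Dstar then (x / Dstar) * (Hb Dstar - Hb β) else Hb x - Hb β)
      = Hb x - Hb β
    rw [if_neg (not_le.mpr hx)]
  clear_value g env
  -- concavity of D ↦ Hb D - Hb β on [0, 1/2]
  have hBconc : ConcaveOn ℝ (Set.Icc (0:ℝ) (1/2)) Real.binEntropy :=
    (Real.strictConcave_binEntropy.concaveOn).subset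
      (Set.Icc_subset_Icc le_rfl (by norm_num)) (convex_Icc _ _)
  have hfconc : ConcaveOn ℝ (Set.Icc (0:ℝ) (1/2)) (fun D => Hb D - Hb β) := by
    have heq : (fun D => Hb D - Hb β)
        = fun D => (1 / Real.log 2) * Real.binEntropy D + (-Hb β) := by
      funext p
      simp only [Hb_eq p]
      ring
    rw [heq]
    exact concaveOn_affine_comp hBconc _ _ (by positivity)
  -- the tangent line bound : Hb x - Hb β ≤ c * x on [0, 1/2]
  have hc' : c = (Real.log (1 - Dstar) - Real.log Dstar) / Real.log 2 := by
    rw [hc_def, Real.logb, Real.log_div (by linarith) (ne_of_gt hD0)]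
  have hB : ∀ x ∈ Set.Icc (0:ℝ) (1/2), Hb x - Hb β ≤ c * x := by
    intro x hx
    have hd : HasDerivAt Real.binEntropy (Real.log (1 - Dstar) - Real.log Dstar) Dstar :=
      Real.hasDerivAt_binEntropy (ne_of_gt hD0) hD1'
    have key : Real.binEntropy x ≤ Real.binEntropy Dstar
        + (x - Dstar) * (Real.log (1 - Dstar) - Real.log Dstar) := by
      rcases lt_trichotomy x Dstar with h | h | h
      · have hs := hBconc.le_slope_of_hasDerivAt hx hDmem h hd
        rw [slope_def_field] at hs
        have hpos : 0 < Dstar - x := by linarith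
        rw [le_div_iff₀ hpos] at hs
        nlinarith
      · rw [h]; simp
      · have hs := hBconc.slope_le_of_hasDerivAt hDmem hx h hd
        rw [slope_def_field] at hs
        have hpos : 0 < x - Dstar := by linarith
        rw [div_le_iff₀ hpos] at hs
        nlinarith
    have h2 : Hb x ≤ Hb Dstar + (x - Dstar) * c := by
      rw [Hb_eq, Hb_eq, hc']
      rw [show Real.binEntropy Dstar / Real.log 2
            + (x - Dstar) * ((Real.log (1 - Dstar) - Real.log Dstar) / Real.log 2)
          = (Real.binEntropy Dstar + (x - Dstar) * (Real.log (1 - Dstar) - Real.log Dstar))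
            / Real.log 2 by ring]
      exact div_le_div_of_nonneg_right key hlog2.le |>.trans_eq rfl
    linarith [h2, hcD]
  -- c ≥ 0
  have hmono : Hb β ≤ Hb Dstar := by
    have hb : Real.binEntropy β < Real.binEntropy Dstar :=
      Real.binEntropy_strictMonoOn ⟨hβ0.le, by linarith [hβ2]⟩
        ⟨hD0.le, by linarith [hD2]⟩ hD1
    rw [Hb_eq, Hb_eq]
    exact div_le_div_of_nonneg_right hb.le hlog2.le
  have hc0 : 0 ≤ c := by
    have h1 : 0 ≤ c * Dstar := by linarith [hcD]
    by_contra hc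
    push_neg at hc
    nlinarith
  have henv_le : ∀ x ∈ Set.Icc (0:ℝ) (1/2), env x ≤ c * x := by
    intro x hx
    rcases le_or_gt x Dstar with h | h
    · rw [henv_eq_lin x h]
    · rw [henv_eq_f x h]; exact hB x hx
  have henv_ge : ∀ x ∈ Set.Icc (0:ℝ) (1/2), Hb x - Hb β ≤ env x := by
    intro x hx
    rcases le_or_gt x Dstar with h | h
    · rw [henv_eq_lin x h]; exact hB x hx
    · rw [henv_eq_f x h]
  -- the mixed-case bound
  have hmixed : ∀ x y a b : ℝ, x ∈ Set.Icc (0:ℝ) (1/2) → y ∈ Set.Icc (0:ℝ) (1/2) →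
      0 ≤ a → 0 ≤ b → a + b = 1 → x ≤ Dstar → Dstar < a * x + b * y →
      a * env x + b * env y ≤ Hb (a * x + b * y) - Hb β := by
    intro x y a b hx hy ha hb hab hxD hzD
    have hb1 : b = 1 - a := by linarith
    subst hb1
    obtain ⟨z, hz_def⟩ : ∃ z, z = a * x + (1 - a) * y := ⟨_, rfl⟩
    rw [← hz_def] at hzD ⊢
    have hyD : Dstar < y := by
      by_contra hcon
      push_neg at hcon
      have p1 : a * x ≤ a * Dstar := mul_le_mul_of_nonneg_left hxD ha
      have p2 : (1 - a) * y ≤ (1 - a) * Dstar := mul_le_mul_of_nonneg_left hcon hb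
      have : z ≤ Dstar := by rw [hz_def]; nlinarith [p1, p2]
      linarith [hzD]
    have hzy : z ≤ y := by
      have p1 : 0 ≤ a * (y - x) :=
        mul_nonneg ha (by linarith [hx.2, hDmem.2] : (0:ℝ) ≤ y - x)
      rw [hz_def]; nlinarith [p1]
    have hfy : Hb y - Hb β ≤ c * y := hB y hy
    obtain ⟨s, hs_def⟩ : ∃ s, s = (y - z) / (y - Dstar) := ⟨_, rfl⟩
    have hyDpos : 0 < y - Dstar := by linarith
    have hs0 : 0 ≤ s := hs_def ▸ div_nonneg (by linarith) hyDpos.le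
    have hs1 : s ≤ 1 := by
      rw [hs_def, div_le_one hyDpos]; linarith
    have hs_eq : s * (y - Dstar) = y - z := by
      rw [hs_def]; exact div_mul_cancel₀ _ hyDpos.ne'
    have ha' : a * (y - x) = y - z := by rw [hz_def]; ring
    have ha_le_s : a ≤ s := by
      nlinarith [mul_le_mul_of_nonneg_left (show y - Dstar ≤ y - x by linarith [hxD]) hs0,
        hs_eq, ha']
    have hconcf := hfconc.2 hDmem hy hs0 (by linarith : (0:ℝ) ≤ 1 - s)
      (by ring : s + (1 - s) = 1)
    simp only [smul_eq_mul] at hconcf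
    have hcomb : s * Dstar + (1 - s) * y = z := by linear_combination - hs_eq
    rw [hcomb] at hconcf
    have hid : a * x + (s - a) * y = s * Dstar := by linear_combination hs_eq - ha'
    have h3 : (s - a) * (Hb y - Hb β) ≤ (s - a) * (c * y) :=
      mul_le_mul_of_nonneg_left hfy (by linarith)
    have h4 : a * (c * x) + (s - a) * (c * y) = s * (c * Dstar) := by
      linear_combination c * hid
    rw [henv_eq_lin x hxD, henv_eq_f y hyD]
    calc a * (c * x) + (1 - a) * (Hb y - Hb β)
        ≤ s * (c * Dstar) + (1 - s) * (Hb y - Hb β) := by nlinarith [h3, h4]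
      _ = s * (Hb Dstar - Hb β) + (1 - s) * (Hb y - Hb β) := by rw [hcD]
      _ ≤ Hb z - Hb β := hconcf
  refine ⟨⟨convex_Icc _ _, ?_⟩, ?_, ?_⟩
  · -- concavity
    intro x hx y hy a b ha hb hab
    simp only [smul_eq_mul]
    obtain ⟨z, hz_def⟩ : ∃ z, z = a * x + b * y := ⟨_, rfl⟩
    rw [← hz_def]
    have hz : z ∈ Set.Icc (0:ℝ) (1/2) := by
      rw [hz_def]; exact (convex_Icc _ _) hx hy ha hb hab
    rcases le_or_gt z Dstar with hzD | hzD
    · rw [henv_eq_lin z hzD]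
      have h1 := henv_le x hx
      have h2 := henv_le y hy
      have hcz : c * z = a * (c * x) + b * (c * y) := by rw [hz_def]; ring
      nlinarith [mul_le_mul_of_nonneg_left h1 ha, mul_le_mul_of_nonneg_left h2 hb, hcz]
    · rw [henv_eq_f z hzD]
      rcases le_or_gt x Dstar with hxD | hxD
      · have := hmixed x y a b hx hy ha hb hab hxD (hz_def ▸ hzD)
        rw [← hz_def] at this
        exact this
      · rcases le_or_gt y Dstar with hyD | hyD
        · have hz' : Dstar < b * y + a * x := by
            rw [show b * y + a * x = a * x + b * y from by ring, ← hz_def]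
            exact hzD
          have hm := hmixed y x b a hy hx hb ha (by linarith) hyD hz'
          rw [show b * y + a * x = a * x + b * y from by ring, ← hz_def] at hm
          linarith [hm]
        · -- both > Dstar : concavity of Hb · - Hb β
          rw [henv_eq_f x hxD, henv_eq_f y hyD]
          have hcf := hfconc.2 hx hy ha hb hab
          simp only [smul_eq_mul] at hcf
          rw [← hz_def] at hcf
          exact hcf
  · -- dominance
    intro D hD
    rcases lt_or_ge D β with h | h
    · rw [hg_lt D h, henv_eq_lin D (by linarith)]
      exact mul_nonneg hc0 hD.1
    · rw [hg_ge D h]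
      exact henv_ge D hD
  · -- minimality
    intro h hconc hdom D hD
    have h0mem : (0:ℝ) ∈ Set.Icc (0:ℝ) (1/2) := ⟨le_rfl, by norm_num⟩
    have hg0 : (0:ℝ) ≤ h 0 := by
      have hh := hdom 0 h0mem
      rwa [hg_lt 0 hβ0] at hh
    have hgD : Hb Dstar - Hb β ≤ h Dstar := by
      have hh := hdom Dstar hDmem
      rwa [hg_ge Dstar hD1.le] at hh
    rcases le_or_gt D Dstar with hDle | hDgt
    · rw [henv_eq_lin D hDle]
      obtain ⟨t, ht_def⟩ : ∃ t, t = D / Dstar := ⟨_, rfl⟩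
      have ht0 : 0 ≤ t := ht_def ▸ div_nonneg hD.1 hD0.le
      have ht1 : t ≤ 1 := by rw [ht_def, div_le_one hD0]; exact hDle
      have htD : t * Dstar = D := by
        rw [ht_def]; exact div_mul_cancel₀ _ hD0.ne'
      have hcomb : (1 - t) * 0 + t * Dstar = D := by rw [htD]; ring
      have hcc := hconc.2 h0mem hDmem (by linarith : (0:ℝ) ≤ 1 - t) ht0
        (by ring : (1 - t) + t = 1)
      simp only [smul_eq_mul] at hcc
      rw [hcomb] at hcc
      have h1 : c * D = t * (Hb Dstar - Hb β) := by
        rw [hcD]; linear_combination c * htD.symm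
      have h2 : t * (Hb Dstar - Hb β) ≤ t * h Dstar :=
        mul_le_mul_of_nonneg_left hgD ht0
      have h3 : 0 ≤ (1 - t) * h 0 := mul_nonneg (by linarith) hg0
      linarith [hcc, h1, h2, h3]
    · rw [henv_eq_f D hDgt]
      have hh := hdom D hD
      rwa [hg_ge D (by linarith)] at hh
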